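/- Let d ∈ ℕ, τ > 0, λ, μ ∈ [0,∞)^d, W ∈ [0,∞)^{d×d}, let Γ ∈ ℝ^{d×d} satisfy Γ_{ik} ≥ 0 for i ≠ k and ∑_{k} Γ_{ik} = 0 for each i, let σ, ρ ∈ [0,1], and let r : [0,τ] → [0,∞)^d be continuous. Then there exists a unique differentiable function p : [0,τ] → ℝ^d with p_i(0) = 1 − ρ for all i and, for all i ∈ {1,…,d} and t ∈ [0,τ], p_i'(t) = λ_i p_i(t)² − ( λ_i + μ_i + ∑_{j=1}^d W_{ij} r_j(t) ) p_i(t) + ∑_{j=1}^d Γ_{ij} p_j(t) + (1−σ)( μ_i + ∑_{j=1}^d W_{ij} r_j(t) ). Moreover this solution satisfies p(t) ∈ [0,1]^d for all t ∈ [0,τ]. -/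

import Mathlib

/-!
Write `m = μ + W r` for the effective death rate, so that the system reads `p' = F(m(t), p)` with
`F(m, x) = λ x² - (λ + m) x + Γ x + (1 - σ) m` (coordinatewise products). Since `F(m, ·)` is a
polynomial and `m` is bounded on `[0, τ]`, the field is Lipschitz on bounded sets uniformly in time,
and uniqueness follows from Gronwall. For existence, precompose `F` with the coordinatewise
projection onto the cube `[0,1]^d`: the truncated field is globally Lipschitz and bounded, so
Picard–Lindelöf gives a solution on all of `[0, τ]`. Where `x_i = 1` the `i`-th component of `F` is
`-σ m_i + ∑_{j ≠ i} Γ_ij (x_j - 1) ≤ 0`, and where `x_i = 0` it is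
`∑_{j ≠ i} Γ_ij x_j + (1 - σ) m_i ≥ 0`, so the solution stays in the cube, where the truncation
does nothing.
-/

open scoped BigOperators

noncomputable section

/-- `p` solves the Riccati-type backward system (4.5) for the non-observation
probabilities on `[0,τ]`, with initial condition `p_i(0) = 1 − ρ`. -/
def IsNonObsSolution {d : ℕ} (τ : ℝ) (lam mu : Fin d → ℝ) (W Γ : Fin d → Fin d → ℝ)
    (sig rho : ℝ) (r : ℝ → Fin d → ℝ) (p : ℝ → Fin d → ℝ) : Prop :=
  (p 0 = fun _ => 1 - rho) ∧
    ∀ i : Fin d, ∀ t ∈ Set.Icc (0 : ℝ) τ,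
      HasDerivWithinAt (fun s => p s i)
        (lam i * (p t i) ^ 2
          - (lam i + mu i + ∑ j, W i j * r t j) * p t i
          + (∑ j, Γ i j * p t j)
          + (1 - sig) * (mu i + ∑ j, W i j * r t j))
        (Set.Icc 0 τ) t

open Set Metric
open scoped NNReal Matrix

section ODE

variable {E : Type*} [NormedAddCommGroup E] [NormedSpace ℝ E]

theorem exists_forall_mem_Icc_hasDerivWithinAt_of_lipschitzWith [CompleteSpace E]
    {f : ℝ → E → E} {a b : ℝ} (hab : a ≤ b) {K : ℝ≥0} {L : ℝ}
    (hlip : ∀ t ∈ Icc a b, LipschitzWith K (f t))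
    (hcont : ∀ x, ContinuousOn (f · x) (Icc a b))
    (hbdd : ∀ t ∈ Icc a b, ∀ x, ‖f t x‖ ≤ L) (x₀ : E) :
    ∃ α : ℝ → E, α a = x₀ ∧ ∀ t ∈ Icc a b, HasDerivWithinAt α (f t (α t)) (Icc a b) t := by
  have hpl : IsPicardLindelof f (⟨a, left_mem_Icc.2 hab⟩ : Icc a b) x₀
      ⟨L.toNNReal * (b - a), by have := sub_nonneg.2 hab; positivity⟩ 0 L.toNNReal K :=
    { lipschitzOnWith := fun t ht => (hlip t ht).lipschitzOnWith
      continuousOn := fun x _ => hcont x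
      norm_le := fun t ht x _ => (hbdd t ht x).trans (Real.le_coe_toNNReal L)
      mul_max_le := by simp [max_eq_left (sub_nonneg.2 hab)]; rfl }
  exact hpl.exists_eq_forall_mem_Icc_hasDerivWithinAt₀

theorem ODE_solution_unique_of_lipschitzOnWith_closedBall {v : ℝ → E → E} {f g : ℝ → E}
    {a b : ℝ} (hv : ∀ R, ∃ K, ∀ t ∈ Icc a b, LipschitzOnWith K (v t) (closedBall 0 R))
    (hf : ∀ t ∈ Icc a b, HasDerivWithinAt f (v t (f t)) (Icc a b) t)
    (hg : ∀ t ∈ Icc a b, HasDerivWithinAt g (v t (g t)) (Icc a b) t) (ha : f a = g a) :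
    EqOn f g (Icc a b) := by
  have hfc : ContinuousOn f (Icc a b) := fun t ht => (hf t ht).continuousWithinAt
  have hgc : ContinuousOn g (Icc a b) := fun t ht => (hg t ht).continuousWithinAt
  obtain ⟨Rf, hRf⟩ := isCompact_Icc.exists_bound_of_continuousOn hfc
  obtain ⟨Rg, hRg⟩ := isCompact_Icc.exists_bound_of_continuousOn hgc
  obtain ⟨K, hK⟩ := hv (max Rf Rg)
  have hfR (t : ℝ) (ht : t ∈ Ico a b) : f t ∈ closedBall 0 (max Rf Rg) :=
    mem_closedBall_zero_iff.2 ((hRf t (Ico_subset_Icc_self ht)).trans (le_max_left _ _))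
  have hgR (t : ℝ) (ht : t ∈ Ico a b) : g t ∈ closedBall 0 (max Rf Rg) :=
    mem_closedBall_zero_iff.2 ((hRg t (Ico_subset_Icc_self ht)).trans (le_max_right _ _))
  have right_deriv {h : ℝ → E} (hh : ∀ t ∈ Icc a b, HasDerivWithinAt h (v t (h t)) (Icc a b) t)
      (t : ℝ) (ht : t ∈ Ico a b) : HasDerivWithinAt h (v t (h t)) (Ici t) t :=
    (hh t (Ico_subset_Icc_self ht)).mono_of_mem_nhdsWithin (Icc_mem_nhdsGE_of_mem ht)
  exact ODE_solution_unique_of_mem_Icc_right (s := fun _ => closedBall 0 (max Rf Rg))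
    (fun t ht => hK t (Ico_subset_Icc_self ht)) hfc (right_deriv hf) hfR hgc (right_deriv hg) hgR ha

end ODE

theorem image_le_of_deriv_nonpos_above {f f' : ℝ → ℝ} {a b c : ℝ}
    (hf : ∀ t ∈ Icc a b, HasDerivWithinAt f (f' t) (Icc a b) t) (ha : f a ≤ c)
    (hf' : ∀ t ∈ Ico a b, c ≤ f t → f' t ≤ 0) : ∀ t ∈ Icc a b, f t ≤ c := by
  -- compare with the strictly increasing barriers `c + δ (1 + (t - a))`, then let `δ → 0`
  have barrier (δ : ℝ) (hδ : 0 < δ) : ∀ t ∈ Icc a b, f t ≤ c + δ * (1 + (t - a)) := by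
    refine image_le_of_deriv_right_lt_deriv_boundary' (B' := fun _ => δ)
      (fun t ht => (hf t ht).continuousWithinAt)
      (fun t ht => (hf t (Ico_subset_Icc_self ht)).mono_of_mem_nhdsWithin
        (Icc_mem_nhdsGE_of_mem ht)) (by simpa using ha.trans (le_add_of_nonneg_right hδ.le))
      (by fun_prop) (fun t _ => ?_) (fun t ht hft => ?_)
    · exact ((((hasDerivAt_id t).sub_const a).const_add 1).const_mul δ).const_add c
        |>.hasDerivWithinAt |>.congr_deriv (by simp)
    · have : c ≤ f t := by rw [hft]; nlinarith [ht.1]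
      exact (hf' t ht this).trans_lt hδ
  intro t ht
  refine le_of_forall_pos_le_add fun ε hε => ?_
  have hpos : 0 < 1 + (t - a) := by linarith [ht.1]
  simpa [div_mul_cancel₀ ε hpos.ne'] using barrier (ε / (1 + (t - a))) (by positivity) t ht

theorem mapsTo_Icc_zero_one_of_hasDerivWithinAt {ι : Type*} [Fintype ι]
    {G : ℝ → (ι → ℝ) → ι → ℝ} {α : ℝ → ι → ℝ} {a b : ℝ}
    (hα : ∀ t ∈ Icc a b, HasDerivWithinAt α (G t (α t)) (Icc a b) t) (ha : α a ∈ Icc 0 1)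
    (hG_one : ∀ t ∈ Ico a b, ∀ x i, 1 ≤ x i → G t x i ≤ 0)
    (hG_zero : ∀ t ∈ Ico a b, ∀ x i, x i ≤ 0 → 0 ≤ G t x i) :
    MapsTo α (Icc a b) (Icc 0 1) := fun t ht => by
  have hα_apply (i : ι) : ∀ t ∈ Icc a b, HasDerivWithinAt (α · i) (G t (α t) i) (Icc a b) t :=
    fun t ht => hasDerivWithinAt_pi.1 (hα t ht) i
  refine ⟨fun i => ?_, fun i => ?_⟩
  · simpa using image_le_of_deriv_nonpos_above (fun t ht => (hα_apply i t ht).neg)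
      (neg_nonpos.2 (ha.1 i)) (fun s hs h => neg_nonpos.2 (hG_zero s hs _ i (neg_nonneg.1 h))) t ht
  · exact image_le_of_deriv_nonpos_above (hα_apply i) (ha.2 i)
      (fun s hs h => hG_one s hs _ i h) t ht

section Cube

variable {ι : Type*}

def projCube (x : ι → ℝ) : ι → ℝ := fun i => projIcc 0 1 zero_le_one (x i)

theorem projCube_mem (x : ι → ℝ) : projCube x ∈ Icc 0 1 :=
  ⟨fun i => (projIcc 0 1 zero_le_one (x i)).2.1, fun i => (projIcc 0 1 zero_le_one (x i)).2.2⟩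

theorem projCube_eq_self {x : ι → ℝ} (hx : x ∈ Icc 0 1) : projCube x = x :=
  funext fun i => congrArg Subtype.val (projIcc_of_mem zero_le_one ⟨hx.1 i, hx.2 i⟩)

theorem projCube_apply_of_one_le {x : ι → ℝ} {i : ι} (hx : 1 ≤ x i) : projCube x i = 1 :=
  congrArg Subtype.val (projIcc_of_right_le zero_le_one hx)

theorem projCube_apply_of_nonpos {x : ι → ℝ} {i : ι} (hx : x i ≤ 0) : projCube x i = 0 :=
  congrArg Subtype.val (projIcc_of_le_left zero_le_one hx)

theorem lipschitzWith_projCube [Fintype ι] : LipschitzWith 1 (projCube : (ι → ℝ) → ι → ℝ) :=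
  LipschitzWith.of_dist_le_mul fun x y => by
    rw [NNReal.coe_one, one_mul, dist_pi_le_iff dist_nonneg]
    intro i
    exact ((LipschitzWith.projIcc zero_le_one).dist_le_mul (x i) (y i)).trans
      (by simpa using dist_le_pi_dist x y i)

theorem Icc_zero_one_subset_closedBall [Fintype ι] :
    Icc (0 : ι → ℝ) 1 ⊆ closedBall 0 1 := fun x hx =>
  mem_closedBall_zero_iff.2 <| (pi_norm_le_iff_of_nonneg zero_le_one).2 fun i => by
    rw [Real.norm_of_nonneg (hx.1 i)]; exact hx.2 i

end Cube

section Riccati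

variable {ι : Type*} [Fintype ι] (lam : ι → ℝ) (Γ : Matrix ι ι ℝ) (sig : ℝ)

def riccatiField (m x : ι → ℝ) : ι → ℝ :=
  lam * x ^ 2 - (lam + m) * x + Γ *ᵥ x + (1 - sig) • m

@[simp]
theorem riccatiField_apply (m x : ι → ℝ) (i : ι) :
    riccatiField lam Γ sig m x i =
      lam i * x i ^ 2 - (lam i + m i) * x i + ∑ j, Γ i j * x j + (1 - sig) * m i := rfl

theorem riccatiField_sub (m x y : ι → ℝ) :
    riccatiField lam Γ sig m x - riccatiField lam Γ sig m y =
      (lam * (x + y) - (lam + m)) * (x - y) + Γ *ᵥ (x - y) := by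
  rw [riccatiField, riccatiField, Matrix.mulVec_sub]; ring

attribute [local instance] Matrix.linftyOpNormedAddCommGroup in
theorem exists_lipschitzOnWith_riccatiField (R M : ℝ) :
    ∃ K : ℝ≥0, ∀ m : ι → ℝ, ‖m‖ ≤ M →
      LipschitzOnWith K (riccatiField lam Γ sig m) (closedBall 0 R) := by
  refine ⟨(‖lam‖ * (2 * R + 1) + M + ‖Γ‖).toNNReal, fun m hm => ?_⟩
  refine LipschitzOnWith.of_dist_le' fun x hx y hy => ?_
  rw [mem_closedBall_zero_iff] at hx hy
  have hcoef : ‖lam * (x + y) - (lam + m)‖ ≤ ‖lam‖ * (2 * R + 1) + M := calc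
    _ ≤ ‖lam‖ * (‖x‖ + ‖y‖) + (‖lam‖ + ‖m‖) :=
      (norm_sub_le _ _).trans (add_le_add ((norm_mul_le _ _).trans
        (mul_le_mul_of_nonneg_left (norm_add_le _ _) (norm_nonneg _))) (norm_add_le _ _))
    _ ≤ ‖lam‖ * (2 * R + 1) + M := by nlinarith [norm_nonneg lam]
  rw [dist_eq_norm, dist_eq_norm, riccatiField_sub]
  calc _ ≤ ‖lam * (x + y) - (lam + m)‖ * ‖x - y‖ + ‖Γ‖ * ‖x - y‖ :=
        (norm_add_le _ _).trans (add_le_add (norm_mul_le _ _) (Matrix.linfty_opNorm_mulVec _ _))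
    _ ≤ (‖lam‖ * (2 * R + 1) + M + ‖Γ‖) * ‖x - y‖ := by nlinarith [norm_nonneg (x - y)]

variable {lam Γ sig}

theorem norm_riccatiField_le_of_lipschitzOnWith {K : ℝ≥0} {m x : ι → ℝ}
    (hK : LipschitzOnWith K (riccatiField lam Γ sig m) (closedBall 0 1)) (hx : ‖x‖ ≤ 1) :
    ‖riccatiField lam Γ sig m x‖ ≤ K + |1 - sig| * ‖m‖ := by
  have h0 : riccatiField lam Γ sig m 0 = (1 - sig) • m := by ext; simp
  have hlip := hK.dist_le_mul x (mem_closedBall_zero_iff.2 hx) 0 (mem_closedBall_self zero_le_one)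
  rw [h0, dist_zero_right] at hlip
  calc ‖riccatiField lam Γ sig m x‖
      ≤ ‖(1 - sig) • m‖ + ‖riccatiField lam Γ sig m x - (1 - sig) • m‖ := norm_le_insert' _ _
    _ ≤ |1 - sig| * ‖m‖ + K * 1 := by
      rw [norm_smul, Real.norm_eq_abs, ← dist_eq_norm]
      gcongr
      exact hlip.trans (mul_le_mul_of_nonneg_left hx K.2)
    _ = K + |1 - sig| * ‖m‖ := by ring

theorem riccatiField_apply_nonpos_of_eq_one {m x : ι → ℝ} {i : ι}
    (hx : x ∈ Icc 0 1) (hxi : x i = 1) (hm : 0 ≤ m i) (hsig : 0 ≤ sig)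
    (hΓ_off : ∀ j, j ≠ i → 0 ≤ Γ i j) (hΓ_row : ∑ j, Γ i j = 0) :
    riccatiField lam Γ sig m x i ≤ 0 := by
  have hΓx : ∑ j, Γ i j * x j ≤ 0 := calc
    ∑ j, Γ i j * x j = ∑ j, Γ i j * (x j - 1) := by
      simp [mul_sub, Finset.sum_sub_distrib, hΓ_row]
    _ ≤ 0 := Finset.sum_nonpos fun j _ => by
      rcases eq_or_ne j i with rfl | hj
      · simp [hxi]
      · exact mul_nonpos_of_nonneg_of_nonpos (hΓ_off j hj) (by linarith [show x j ≤ 1 from hx.2 j])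
  rw [riccatiField_apply, hxi]
  nlinarith

theorem riccatiField_apply_nonneg_of_eq_zero {m x : ι → ℝ} {i : ι}
    (hx : x ∈ Icc 0 1) (hxi : x i = 0) (hm : 0 ≤ m i) (hsig : sig ≤ 1)
    (hΓ_off : ∀ j, j ≠ i → 0 ≤ Γ i j) :
    0 ≤ riccatiField lam Γ sig m x i := by
  have hΓx : 0 ≤ ∑ j, Γ i j * x j := Finset.sum_nonneg fun j _ => by
    rcases eq_or_ne j i with rfl | hj
    · simp [hxi]
    · exact mul_nonneg (hΓ_off j hj) (hx.1 j)
  rw [riccatiField_apply, hxi]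
  nlinarith

end Riccati

section RiccatiSolution

variable {ι : Type*} [Fintype ι] {lam : ι → ℝ} {Γ : Matrix ι ι ℝ} {sig : ℝ} {m : ℝ → ι → ℝ}
  {a b : ℝ}

theorem exists_lipschitzOnWith_riccatiField_of_continuousOn (hm : ContinuousOn m (Icc a b))
    (R : ℝ) : ∃ K : ℝ≥0, ∀ t ∈ Icc a b,
      LipschitzOnWith K (riccatiField lam Γ sig (m t)) (closedBall 0 R) := by
  obtain ⟨M, hM⟩ := isCompact_Icc.exists_bound_of_continuousOn hm
  obtain ⟨K, hK⟩ := exists_lipschitzOnWith_riccatiField lam Γ sig R M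
  exact ⟨K, fun t ht => hK (m t) (hM t ht)⟩

theorem eqOn_Icc_of_hasDerivWithinAt_riccatiField (hm : ContinuousOn m (Icc a b)) {p q : ℝ → ι → ℝ}
    (hp : ∀ t ∈ Icc a b, HasDerivWithinAt p (riccatiField lam Γ sig (m t) (p t)) (Icc a b) t)
    (hq : ∀ t ∈ Icc a b, HasDerivWithinAt q (riccatiField lam Γ sig (m t) (q t)) (Icc a b) t)
    (ha : p a = q a) : EqOn p q (Icc a b) :=
  ODE_solution_unique_of_lipschitzOnWith_closedBall
    (exists_lipschitzOnWith_riccatiField_of_continuousOn hm) hp hq ha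

theorem exists_mapsTo_Icc_zero_one_hasDerivWithinAt_riccatiField (hab : a ≤ b)
    (hm : ContinuousOn m (Icc a b)) (hm_nonneg : ∀ t ∈ Icc a b, 0 ≤ m t) (hsig : sig ∈ Icc 0 1)
    (hΓ_off : ∀ i j, i ≠ j → 0 ≤ Γ i j) (hΓ_row : ∀ i, ∑ j, Γ i j = 0)
    {x₀ : ι → ℝ} (hx₀ : x₀ ∈ Icc 0 1) :
    ∃ p : ℝ → ι → ℝ, p a = x₀ ∧ MapsTo p (Icc a b) (Icc 0 1) ∧
      ∀ t ∈ Icc a b, HasDerivWithinAt p (riccatiField lam Γ sig (m t) (p t)) (Icc a b) t := by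
  set G : ℝ → (ι → ℝ) → ι → ℝ := fun t x => riccatiField lam Γ sig (m t) (projCube x)
  obtain ⟨M, hM⟩ := isCompact_Icc.exists_bound_of_continuousOn hm
  obtain ⟨K, hK⟩ :=
    exists_lipschitzOnWith_riccatiField_of_continuousOn (lam := lam) (Γ := Γ) (sig := sig) hm 1
  have hG_lip : ∀ t ∈ Icc a b, LipschitzWith K (G t) := fun t ht => by
    have := lipschitzOnWith_univ.1 ((hK t ht).comp lipschitzWith_projCube.lipschitzOnWith
      fun x _ => Icc_zero_one_subset_closedBall (projCube_mem x))
    rwa [mul_one] at this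
  have hG_bdd : ∀ t ∈ Icc a b, ∀ x, ‖G t x‖ ≤ K + |1 - sig| * M := fun t ht x =>
    (norm_riccatiField_le_of_lipschitzOnWith (hK t ht)
      (mem_closedBall_zero_iff.1 (Icc_zero_one_subset_closedBall (projCube_mem x)))).trans
      (by gcongr; exact hM t ht)
  have hG_cont : ∀ x, ContinuousOn (G · x) (Icc a b) := fun x => by
    simp only [G, riccatiField]
    fun_prop
  obtain ⟨p, hp₀, hp⟩ := exists_forall_mem_Icc_hasDerivWithinAt_of_lipschitzWith hab hG_lip hG_cont
    hG_bdd x₀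
  have hp_cube : MapsTo p (Icc a b) (Icc 0 1) :=
    mapsTo_Icc_zero_one_of_hasDerivWithinAt hp (hp₀ ▸ hx₀)
      (fun t ht x i hxi => riccatiField_apply_nonpos_of_eq_one (projCube_mem x)
        (projCube_apply_of_one_le hxi) (hm_nonneg t (Ico_subset_Icc_self ht) i) hsig.1
        (fun j hj => hΓ_off i j hj.symm) (hΓ_row i))
      (fun t ht x i hxi => riccatiField_apply_nonneg_of_eq_zero (projCube_mem x)
        (projCube_apply_of_nonpos hxi) (hm_nonneg t (Ico_subset_Icc_self ht) i) hsig.2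
        (fun j hj => hΓ_off i j hj.symm))
  refine ⟨p, hp₀, hp_cube, fun t ht => ?_⟩
  simpa [G, projCube_eq_self (hp_cube ht)] using hp t ht

end RiccatiSolution

theorem isNonObsSolution_iff {d : ℕ} {τ : ℝ} {lam mu : Fin d → ℝ} {W Γ : Fin d → Fin d → ℝ}
    {sig rho : ℝ} {r p : ℝ → Fin d → ℝ} :
    IsNonObsSolution τ lam mu W Γ sig rho r p ↔ p 0 = (fun _ => 1 - rho) ∧
      ∀ t ∈ Icc 0 τ, HasDerivWithinAt p
        (riccatiField lam (.of Γ) sig (mu + .of W *ᵥ r t) (p t)) (Icc 0 τ) t := by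
  have hfield (t : ℝ) (i : Fin d) : riccatiField lam (.of Γ) sig (mu + .of W *ᵥ r t) (p t) i =
      lam i * p t i ^ 2 - (lam i + mu i + ∑ j, W i j * r t j) * p t i + ∑ j, Γ i j * p t j
        + (1 - sig) * (mu i + ∑ j, W i j * r t j) := by
    rw [riccatiField_apply]
    simp only [Pi.add_apply, Matrix.mulVec, dotProduct, Matrix.of_apply]
    ring
  simp only [IsNonObsSolution, hasDerivWithinAt_pi, hfield]
  exact and_congr_right fun _ => ⟨fun h t ht i => h i t ht, fun h i t ht => h t ht i⟩

theorem nonobservation_equation_existence_uniqueness_general (d : ℕ)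
    (τ : ℝ) (hτ : 0 < τ)
    (lam mu : Fin d → ℝ) (hmu : ∀ i, 0 ≤ mu i)
    (W : Fin d → Fin d → ℝ) (hW : ∀ i j, 0 ≤ W i j)
    (Γ : Fin d → Fin d → ℝ)
    (hΓ_off : ∀ i k, i ≠ k → 0 ≤ Γ i k)
    (hΓ_row : ∀ i, ∑ k, Γ i k = 0)
    (sig rho : ℝ) (hsig : sig ∈ Set.Icc (0 : ℝ) 1) (hrho : rho ∈ Set.Icc (0 : ℝ) 1)
    (r : ℝ → Fin d → ℝ) (hr_cont : ContinuousOn r (Set.Icc 0 τ))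
    (hr_nonneg : ∀ t ∈ Set.Icc (0 : ℝ) τ, ∀ j, 0 ≤ r t j) :
    ∃ p : ℝ → Fin d → ℝ,
      (IsNonObsSolution τ lam mu W Γ sig rho r p ∧
        ∀ t ∈ Set.Icc (0 : ℝ) τ, ∀ i, p t i ∈ Set.Icc (0 : ℝ) 1) ∧
      ∀ q : ℝ → Fin d → ℝ, IsNonObsSolution τ lam mu W Γ sig rho r q →
        ∀ t ∈ Set.Icc (0 : ℝ) τ, q t = p t := by
  set m : ℝ → Fin d → ℝ := fun t => mu + .of W *ᵥ r t
  have hm : ContinuousOn m (Icc 0 τ) := by fun_prop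
  have hm_nonneg : ∀ t ∈ Icc 0 τ, 0 ≤ m t := fun t ht i =>
    add_nonneg (hmu i)
      (Finset.sum_nonneg fun j _ => mul_nonneg (hW i j) (hr_nonneg t ht j) : 0 ≤ ∑ j, W i j * r t j)
  have hx₀ : (fun _ => 1 - rho : Fin d → ℝ) ∈ Icc 0 1 :=
    ⟨fun _ => sub_nonneg.2 hrho.2, fun _ => sub_le_self _ hrho.1⟩
  obtain ⟨p, hp₀, hp_cube, hp⟩ :=
    exists_mapsTo_Icc_zero_one_hasDerivWithinAt_riccatiField hτ.le hm hm_nonneg hsig hΓ_off hΓ_row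
      hx₀
  refine ⟨p, ⟨isNonObsSolution_iff.2 ⟨hp₀, hp⟩, fun t ht i => ⟨(hp_cube ht).1 i, (hp_cube ht).2 i⟩⟩,
    fun q hq t ht => ?_⟩
  obtain ⟨hq₀, hq⟩ := isNonObsSolution_iff.1 hq
  exact eqOn_Icc_of_hasDerivWithinAt_riccatiField hm hq hp (hq₀.trans hp₀.symm) ht

/-- Well-posedness of the backward equations (4.5) for the non-observation probabilities:
there is a unique solution on `[0,τ]` with `p_i(0) = 1 − ρ`, and this solution takes
values in `[0,1]^d`. -/
theorem nonobservation_equation_existence_uniqueness (d : ℕ) (hd : 0 < d)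
    (τ : ℝ) (hτ : 0 < τ)
    (lam mu : Fin d → ℝ) (hlam : ∀ i, 0 ≤ lam i) (hmu : ∀ i, 0 ≤ mu i)
    (W : Fin d → Fin d → ℝ) (hW : ∀ i j, 0 ≤ W i j)
    (Γ : Fin d → Fin d → ℝ)
    (hΓ_off : ∀ i k, i ≠ k → 0 ≤ Γ i k)
    (hΓ_row : ∀ i, ∑ k, Γ i k = 0)
    (sig rho : ℝ) (hsig : sig ∈ Set.Icc (0 : ℝ) 1) (hrho : rho ∈ Set.Icc (0 : ℝ) 1)
    (r : ℝ → Fin d → ℝ) (hr_cont : ContinuousOn r (Set.Icc 0 τ))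
    (hr_nonneg : ∀ t ∈ Set.Icc (0 : ℝ) τ, ∀ j, 0 ≤ r t j) :
    ∃ p : ℝ → Fin d → ℝ,
      (IsNonObsSolution τ lam mu W Γ sig rho r p ∧
        ∀ t ∈ Set.Icc (0 : ℝ) τ, ∀ i, p t i ∈ Set.Icc (0 : ℝ) 1) ∧
      ∀ q : ℝ → Fin d → ℝ, IsNonObsSolution τ lam mu W Γ sig rho r q →
        ∀ t ∈ Set.Icc (0 : ℝ) τ, q t = p t :=
  nonobservation_equation_existence_uniqueness_general d τ hτ lam mu hmu W hW Γ hΓ_off hΓ_row sig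
    rho hsig hrho r hr_cont hr_nonneg
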